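/- arXiv:2105.11999 — 3 statements merged into one kernel-verified Lean document; each statement's English description precedes it below -/
import Mathlib

section
/- Greedy tracking on a segment is optimal: let B, E ∈ ℝ, B ≤ E, and target x* ∈ [B, E]. Define a sequence by s_0 = 0 and at each round t+1 choose c_{t+1} ∈ {B, E} to minimize |((s_t·t + c_{t+1})/(t+1)) − x*|, setting s_{t+1} = (s_t·t + c_{t+1})/(t+1). Then for every t ≥ 1, |s_t − x*| ≤ (E − B)/t. -/
/-!
Track the scaled error `t * (s t - xstar)`: one greedy round adds `c - xstar` to it, where `c - xstar`
is either `B - xstar ≤ 0` or `E - xstar ≥ 0`. Adding the summand of sign opposite to the current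
error keeps it within `E - B`, and the greedy choice is at least as good, so
`|t * (s t - xstar)| ≤ E - B` for all `t`.
-/

lemma abs_add_le_sub_or {a b e : ℝ} (ha : a ≤ 0) (hb : 0 ≤ b) (he : |e| ≤ b - a) :
    |e + a| ≤ b - a ∨ |e + b| ≤ b - a := by
  rw [abs_le] at he
  rcases le_total 0 e with he0 | he0
  · exact .inl (abs_le.2 ⟨by linarith, by linarith⟩)
  · exact .inr (abs_le.2 ⟨by linarith, by linarith⟩)

lemma mul_avg_sub_eq {m : ℝ} (hm : m + 1 ≠ 0) (x c y : ℝ) :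
    (m + 1) * ((x * m + c) / (m + 1) - y) = m * (x - y) + (c - y) := by
  field_simp
  ring

lemma abs_scaled_error_greedy_le {B E y x c m : ℝ} (hy : y ∈ Set.Icc B E) (hm : 0 ≤ m)
    (hgreedy : ∀ d ∈ ({B, E} : Set ℝ),
      |(x * m + c) / (m + 1) - y| ≤ |(x * m + d) / (m + 1) - y|)
    (hx : |m * (x - y)| ≤ E - B) :
    |(m + 1) * ((x * m + c) / (m + 1) - y)| ≤ E - B := by
  have hm1 : 0 < m + 1 := by linarith
  have hchoice : ∀ d ∈ ({B, E} : Set ℝ),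
      |(m + 1) * ((x * m + c) / (m + 1) - y)| ≤ |m * (x - y) + (d - y)| := fun d hd => by
    rw [← mul_avg_sub_eq hm1.ne', abs_mul, abs_mul]
    exact mul_le_mul_of_nonneg_left (hgreedy d hd) (abs_nonneg _)
  have hD : (E - y) - (B - y) = E - B := sub_sub_sub_cancel_right E B y
  rcases abs_add_le_sub_or (a := B - y) (b := E - y) (by linarith [hy.1]) (by linarith [hy.2])
    (hD ▸ hx) with hB | hE
  · exact (hchoice B (by simp)).trans (hD ▸ hB)
  · exact (hchoice E (by simp)).trans (hD ▸ hE)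

theorem greedy_tracking_optimal_general (B E : ℝ)
    (xstar : ℝ) (hx : xstar ∈ Set.Icc B E)
    (s c : ℕ → ℝ)
    (hgreedy : ∀ t : ℕ, ∀ d ∈ ({B, E} : Set ℝ),
      |(s t * t + c (t + 1)) / (t + 1) - xstar| ≤ |(s t * t + d) / (t + 1) - xstar|)
    (hrec : ∀ t : ℕ, s (t + 1) = (s t * t + c (t + 1)) / (t + 1)) :
    ∀ t : ℕ, 1 ≤ t → |s t - xstar| ≤ (E - B) / t := by
  have hscaled : ∀ t : ℕ, |t * (s t - xstar)| ≤ E - B := by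
    intro t
    induction t with
    | zero => simpa using hx.1.trans hx.2
    | succ t ih =>
      rw [hrec, Nat.cast_succ]
      exact abs_scaled_error_greedy_le hx t.cast_nonneg (hgreedy t) ih
  intro t ht
  have ht' : (0 : ℝ) < t := by exact_mod_cast ht
  rw [le_div_iff₀ ht']
  simpa [abs_mul, abs_of_pos ht', mul_comm] using hscaled t

theorem greedy_tracking_optimal (B E : ℝ) (hBE : B ≤ E)
    (xstar : ℝ) (hx : xstar ∈ Set.Icc B E)
    (s c : ℕ → ℝ) (hs0 : s 0 = 0)
    (hc : ∀ t : ℕ, c (t + 1) ∈ ({B, E} : Set ℝ))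
    (hgreedy : ∀ t : ℕ, ∀ d ∈ ({B, E} : Set ℝ),
      |(s t * t + c (t + 1)) / (t + 1) - xstar| ≤ |(s t * t + d) / (t + 1) - xstar|)
    (hrec : ∀ t : ℕ, s (t + 1) = (s t * t + c (t + 1)) / (t + 1)) :
    ∀ t : ℕ, 1 ≤ t → |s t - xstar| ≤ (E - B) / t :=
  greedy_tracking_optimal_general B E xstar hx s c hgreedy hrec
end

section
/- One-step reachability of the grid optimum: let g : [0,1] → ℝ be concave. Suppose n ∈ {0,…,t} maximizes g(k/t) over k ∈ {0,…,t}. Then a maximizer of g(k/(t+1)) over k ∈ {0,…,t+1} can be found in {n, n+1}; i.e., max_{k ∈ {0,…,t+1}} g(k/(t+1)) = max(g(n/(t+1)), g((n+1)/(t+1))). -/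
/-!
The grids interlace: for `i ≤ t`, `i/(t+1) ≤ i/t ≤ (i+1)/(t+1)`. If `n < t`, maximality gives
`g((n+1)/t) ≤ g(n/t)`; a concave `g` that falls from `n/t` to `(n+1)/t` keeps falling to the right
of `(n+1)/t`, where every `k/(t+1)` with `k ≥ n+2` lies, and stays above `g((n+1)/t)` on
`[n/t, (n+1)/t] ∋ (n+1)/(t+1)`. The points `k < n` are handled symmetrically using
`(n-1)/t ≤ n/(t+1) ≤ n/t`.
-/

open Set

section Concave

variable {s : Set ℝ} {g : ℝ → ℝ} {x a b c : ℝ}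

theorem ConcaveOn.le_of_le_of_mem_Icc_of_le_right (hg : ConcaveOn ℝ s g) (hx : x ∈ s)
    (hc : c ∈ s) (hxa : x ≤ a) (hac : a < c) (hb : b ∈ Icc a c) (hgac : g a ≤ g c) :
    g x ≤ g b := by
  have ha : a ∈ s := hg.1.ordConnected.out hx hc ⟨hxa, hac.le⟩
  calc g x ≤ g a := hg.left_le_of_le_right'' hx hc hxa hac hgac
    _ = min (g a) (g c) := (min_eq_left hgac).symm
    _ ≤ g b := hg.min_le_of_mem_Icc ha hc hb

theorem ConcaveOn.le_of_le_of_mem_Icc_of_le_left (hg : ConcaveOn ℝ s g) (ha : a ∈ s)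
    (hx : x ∈ s) (hac : a < c) (hcx : c ≤ x) (hb : b ∈ Icc a c) (hgca : g c ≤ g a) :
    g x ≤ g b := by
  have hc : c ∈ s := hg.1.ordConnected.out ha hx ⟨hac.le, hcx⟩
  calc g x ≤ g c := hg.right_le_of_le_left'' ha hx hac hcx hgca
    _ = min (g a) (g c) := (min_eq_right hgca).symm
    _ ≤ g b := hg.min_le_of_mem_Icc ha hc hb

end Concave

theorem div_le_div_add_one {i t : ℝ} (hi : 0 ≤ i) (ht : 0 < t) : i / (t + 1) ≤ i / t :=
  div_le_div_of_nonneg_left hi ht (by linarith)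

theorem div_le_add_one_div_add_one {i t : ℝ} (ht : 0 < t) (hit : i ≤ t) :
    i / t ≤ (i + 1) / (t + 1) := by
  rw [div_le_div_iff₀ ht (by linarith)]
  linarith

theorem natCast_div_mem_Icc {k m : ℕ} (hkm : k ≤ m) : (k : ℝ) / m ∈ Icc (0 : ℝ) 1 :=
  ⟨by positivity, div_le_one_of_le₀ (by exact_mod_cast hkm) (Nat.cast_nonneg m)⟩

section Grid

variable {g : ℝ → ℝ} {k m t : ℕ}

theorem ConcaveOn.apply_div_add_one_le_of_rise (hg : ConcaveOn ℝ (Icc 0 1) g) (hmt : m + 1 ≤ t)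
    (hrise : g (m / t) ≤ g ((m + 1) / t)) (hkm : k ≤ m) :
    g (k / (t + 1)) ≤ g ((m + 1) / (t + 1)) := by
  have ht : (0 : ℝ) < t := by exact_mod_cast (by omega : 0 < t)
  have hmt' : (m : ℝ) + 1 ≤ t := by exact_mod_cast hmt
  have hkm' : (k : ℝ) ≤ m := by exact_mod_cast hkm
  refine hg.le_of_le_of_mem_Icc_of_le_right (c := (m + 1) / t) ?_ ?_ ?_
    (div_lt_div_of_pos_right (by linarith) ht) ?_ hrise
  · exact_mod_cast natCast_div_mem_Icc (by omega : k ≤ t + 1)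
  · exact_mod_cast natCast_div_mem_Icc hmt
  · calc (k : ℝ) / (t + 1) ≤ m / (t + 1) := by gcongr
      _ ≤ m / t := div_le_div_add_one (by positivity) ht
  · exact ⟨div_le_add_one_div_add_one ht (by linarith), div_le_div_add_one (by positivity) ht⟩

theorem ConcaveOn.apply_div_le_of_fall (hg : ConcaveOn ℝ (Icc 0 1) g) (hmt : m + 1 ≤ t)
    (hfall : g ((m + 1) / t) ≤ g (m / t)) (hmk : m + 2 ≤ k) (hkt : k ≤ t + 1) :
    g (k / (t + 1)) ≤ g ((m + 1) / (t + 1)) := by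
  have ht : (0 : ℝ) < t := by exact_mod_cast (by omega : 0 < t)
  have hmt' : (m : ℝ) + 1 ≤ t := by exact_mod_cast hmt
  have hmk' : (m : ℝ) + 1 + 1 ≤ k := by exact_mod_cast hmk
  refine hg.le_of_le_of_mem_Icc_of_le_left (c := (m + 1) / t) ?_ ?_
    (div_lt_div_of_pos_right (by linarith) ht) ?_ ?_ hfall
  · exact natCast_div_mem_Icc (by omega)
  · exact_mod_cast natCast_div_mem_Icc hkt
  · calc ((m : ℝ) + 1) / t ≤ (m + 1 + 1) / (t + 1) := div_le_add_one_div_add_one ht hmt'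
      _ ≤ k / (t + 1) := by gcongr
  · exact ⟨div_le_add_one_div_add_one ht (by linarith), div_le_div_add_one (by positivity) ht⟩

end Grid

theorem grid_optimum_one_step_reachable_general (g : ℝ → ℝ)
    (hg : ConcaveOn ℝ (Set.Icc (0 : ℝ) 1) g)
    (t : ℕ) (n : ℕ) (hn : n ≤ t)
    (hmax : ∀ k : ℕ, k ≤ t → g ((k : ℝ) / t) ≤ g ((n : ℝ) / t)) :
    ∀ k : ℕ, k ≤ t + 1 →
      g ((k : ℝ) / (t + 1)) ≤
        max (g ((n : ℝ) / (t + 1))) (g (((n : ℝ) + 1) / (t + 1))) := by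
  intro k hk
  rcases lt_trichotomy k n with hkn | rfl | hnk
  · obtain ⟨m, rfl⟩ : ∃ m, n = m + 1 := ⟨n - 1, by omega⟩
    push_cast at hmax ⊢
    exact le_max_of_le_left (hg.apply_div_add_one_le_of_rise hn (hmax m (by omega)) (by omega))
  · exact le_max_left _ _
  · obtain rfl | hnk : k = n + 1 ∨ n + 2 ≤ k := by omega
    · push_cast
      exact le_max_right _ _
    have hfall := hmax (n + 1) (by omega)
    push_cast at hfall
    exact le_max_of_le_right (hg.apply_div_le_of_fall (by omega) hfall hnk hk)

theorem grid_optimum_one_step_reachable (g : ℝ → ℝ)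
    (hg : ConcaveOn ℝ (Set.Icc (0 : ℝ) 1) g)
    (t : ℕ) (ht : 1 ≤ t) (n : ℕ) (hn : n ≤ t)
    (hmax : ∀ k : ℕ, k ≤ t → g ((k : ℝ) / t) ≤ g ((n : ℝ) / t)) :
    ∀ k : ℕ, k ≤ t + 1 →
      g ((k : ℝ) / (t + 1)) ≤
        max (g ((n : ℝ) / (t + 1))) (g (((n : ℝ) + 1) / (t + 1))) :=
  grid_optimum_one_step_reachable_general g hg t n hn hmax
end

section
/- Max-min fairness is the limit of α-fairness on a segment: for B, E ∈ (0,∞)^K, let x_α maximize U_α over the segment [B,E]. Then as α → ∞, every limit point x of x_α maximizes min_k x_k over [B,E]. -/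
/-!
Suppose some `y` on the segment had `min y = m > min x̄ = x̄ k₀`, and pick `min x̄ < t < m`.
Along the sequence, eventually `x_α k₀ < t`. Maximizing `U_α` for `α > 1` is minimizing
`∑ x_k ^ (1 - α)`, so `t ^ (1 - α) ≤ ∑ (x_α)_k ^ (1 - α) ≤ ∑ y_k ^ (1 - α) ≤ |K| m ^ (1 - α)`,
i.e. `(m / t) ^ (α - 1) ≤ |K|`, which fails for large `α` since `m / t > 1`.
-/

open Filter

lemma isClosed_segment {E : Type*} [AddCommGroup E] [Module ℝ E] [TopologicalSpace E]
    [IsTopologicalAddGroup E] [ContinuousSMul ℝ E] [T2Space E] (x y : E) :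
    IsClosed (segment ℝ x y) := by
  rw [← convexHull_pair]
  exact (Set.toFinite _).isClosed_convexHull ℝ

lemma pos_of_mem_segment {K : Type*} {B E z : K → ℝ} (hB : ∀ k, 0 < B k) (hE : ∀ k, 0 < E k)
    (hz : z ∈ segment ℝ B E) (k : K) : 0 < z k := by
  have hconv : Convex ℝ (Set.univ.pi fun _ : K => Set.Ioi (0 : ℝ)) :=
    convex_pi fun _ _ => convex_Ioi 0
  exact hconv.segment_subset (fun k _ => hB k) (fun k _ => hE k) hz k (Set.mem_univ k)

section Fintype

variable {K : Type*} [Fintype K]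

lemma sum_rpow_le_of_sum_rpow_div_le {α : ℝ} (hα : 1 < α) {u v : K → ℝ}
    (h : ∑ k, v k ^ (1 - α) / (1 - α) ≤ ∑ k, u k ^ (1 - α) / (1 - α)) :
    ∑ k, u k ^ (1 - α) ≤ ∑ k, v k ^ (1 - α) := by
  rw [← Finset.sum_div, ← Finset.sum_div] at h
  exact (div_le_div_right_of_neg (by linarith)).mp h

lemma rpow_div_le_card_of_sum_rpow_neg_le {u v : K → ℝ} {m p : ℝ} (hu : ∀ k, 0 < u k)
    (hm : 0 < m) (hmv : ∀ k, m ≤ v k) (hp : 0 < p)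
    (hsum : ∑ k, u k ^ (-p) ≤ ∑ k, v k ^ (-p)) (k : K) :
    (m / u k) ^ p ≤ Fintype.card K := by
  have hsingle : u k ^ (-p) ≤ ∑ j, u j ^ (-p) :=
    Finset.single_le_sum (fun j _ => (Real.rpow_pos_of_pos (hu j) _).le) (Finset.mem_univ k)
  have hbound : ∑ j, v j ^ (-p) ≤ Fintype.card K * m ^ (-p) := by
    calc ∑ j, v j ^ (-p) ≤ ∑ _j : K, m ^ (-p) :=
          Finset.sum_le_sum fun j _ => Real.rpow_le_rpow_of_nonpos hm (hmv j) (by linarith)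
      _ = Fintype.card K * m ^ (-p) := by simp
  calc (m / u k) ^ p = m ^ p * u k ^ (-p) := by
        rw [Real.div_rpow hm.le (hu k).le, Real.rpow_neg (hu k).le, div_eq_mul_inv]
    _ ≤ m ^ p * (Fintype.card K * m ^ (-p)) := by
        gcongr
        exact hsingle.trans (hsum.trans hbound)
    _ = Fintype.card K := by
        rw [Real.rpow_neg hm.le]
        field_simp

end Fintype

theorem maxmin_limit_of_alpha_fair {K : Type*} [Fintype K] [Nonempty K]
    (B E : K → ℝ) (hB : ∀ k, 0 < B k) (hE : ∀ k, 0 < E k)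
    (x : ℝ → (K → ℝ))
    (hmem : ∀ α : ℝ, 1 < α → x α ∈ segment ℝ B E)
    (hmax : ∀ α : ℝ, 1 < α → ∀ y ∈ segment ℝ B E,
      ∑ k, (y k) ^ (1 - α) / (1 - α) ≤ ∑ k, (x α k) ^ (1 - α) / (1 - α))
    (xbar : K → ℝ) (a : ℕ → ℝ) (ha1 : ∀ n, 1 < a n)
    (ha : Filter.Tendsto a Filter.atTop Filter.atTop)
    (hconv : Filter.Tendsto (fun n => x (a n)) Filter.atTop (nhds xbar)) :
    xbar ∈ segment ℝ B E ∧
    ∀ y ∈ segment ℝ B E, (⨅ k, y k) ≤ ⨅ k, xbar k := by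
  have hxbar : xbar ∈ segment ℝ B E :=
    (isClosed_segment B E).mem_of_tendsto hconv (Eventually.of_forall fun n => hmem _ (ha1 n))
  refine ⟨hxbar, fun y hy => ?_⟩
  by_contra! hlt
  obtain ⟨k₀, hk₀⟩ := exists_eq_ciInf_of_finite (f := xbar)
  set m := ⨅ k, y k
  obtain ⟨t, hxt, htm⟩ := exists_between hlt
  have ht : 0 < t := (hk₀ ▸ pos_of_mem_segment hB hE hxbar k₀).trans hxt
  have hm : 0 < m := ht.trans htm
  have hbounded : ∀ᶠ n in atTop, (m / t) ^ (a n - 1) ≤ Fintype.card K := by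
    filter_upwards [(tendsto_pi_nhds.1 hconv k₀).eventually_lt_const (hk₀ ▸ hxt)] with n hn
    have hxpos := pos_of_mem_segment hB hE (hmem _ (ha1 n))
    have hsum := sum_rpow_le_of_sum_rpow_div_le (ha1 n) (hmax _ (ha1 n) y hy)
    rw [← neg_sub] at hsum
    have hp : 0 < a n - 1 := sub_pos.2 (ha1 n)
    calc (m / t) ^ (a n - 1) ≤ (m / x (a n) k₀) ^ (a n - 1) := by
          have := hxpos k₀
          gcongr
      _ ≤ Fintype.card K := rpow_div_le_card_of_sum_rpow_neg_le hxpos hm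
          (ciInf_le (Finite.bddBelow_range y)) hp hsum k₀
  have hunbounded : Tendsto (fun n => (m / t) ^ (a n - 1)) atTop atTop :=
    (tendsto_rpow_atTop_of_base_gt_one _ ((one_lt_div ht).2 htm)).comp
      (tendsto_atTop_add_const_right _ (-1) ha)
  obtain ⟨n, hle, hgt⟩ := (hbounded.and (hunbounded.eventually_gt_atTop _)).exists
  exact hle.not_gt hgt
end
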